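/- Let 𝔮 be a prime with 𝔮 > 3, and let p be an integer not divisible by 𝔮. Then for every integer j, Σ_{ν=0}^{𝔮²−1} ζ_{𝔮²}^{jν − 4pν³} = 0 if and only if the Legendre symbol (3pj / 𝔮) equals −1. In particular this forces 𝔮 ∤ j; equivalently, the points of constancy at time t = πp/𝔮² are exactly the j with (j/𝔮) = 1 when (3p/𝔮) = −1, and exactly the j with (j/𝔮) = −1 when (3p/𝔮) = 1. -/
import Mathlib

/-- ζ_m = exp(2πi/m), the primitive m-th root of unity. -/
noncomputable def zeta (m : ℕ) : ℂ := Complex.exp (2 * Real.pi * Complex.I / (m : ℂ))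

open Finset

private lemma geom_aux {ω : ℂ} {q : ℕ} (hω : ω ^ q = 1) :
    ∑ b ∈ Finset.range q, ω ^ b = if ω = 1 then (q : ℂ) else 0 := by
  split_ifs with h
  · simp [h]
  · rw [geom_sum_eq h, hω]; simp

/-- For a prime 𝔮 > 3 and an integer p not divisible by 𝔮, the even
partial Kummer sum for q = 𝔮², namely Σ_{ν=0}^{𝔮²−1} ζ_{𝔮²}^{jν − 4pν³}, vanishes
if and only if the Legendre symbol (3pj / 𝔮) equals −1. -/
theorem points_of_constancy_prime_square
    (𝔮 : ℕ) [Fact 𝔮.Prime] (h𝔮 : 3 < 𝔮) (p : ℤ) (hp : ¬ (𝔮 : ℤ) ∣ p) (j : ℤ) :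
    (∑ ν ∈ Finset.range (𝔮 ^ 2),
        zeta (𝔮 ^ 2) ^ (j * (ν : ℤ) - 4 * p * (ν : ℤ) ^ 3)) = 0 ↔
    legendreSym 𝔮 (3 * p * j) = -1 := by
  classical
  have hq : 𝔮.Prime := Fact.out
  have hq0 : 𝔮 ≠ 0 := hq.ne_zero
  have hq2 : 𝔮 ≠ 2 := by omega
  have hQ0 : 𝔮 ^ 2 ≠ 0 := pow_ne_zero _ hq0
  haveI : NeZero 𝔮 := ⟨hq0⟩
  set ζ : ℂ := zeta (𝔮 ^ 2) with hζdef
  have hprim : IsPrimitiveRoot ζ (𝔮 ^ 2) := by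
    rw [hζdef]
    unfold zeta
    exact Complex.isPrimitiveRoot_exp (𝔮 ^ 2) hQ0
  have hζ0 : ζ ≠ 0 := Complex.exp_ne_zero _
  set f : ℕ → ℂ := fun ν => ζ ^ (j * (ν : ℤ) - 4 * p * (ν : ℤ) ^ 3) with hfdef
  have hone : ∀ l : ℤ, ζ ^ l = 1 ↔ ((𝔮 : ℤ) ^ 2) ∣ l := by
    intro l
    rw [hprim.zpow_eq_one_iff_dvd]
    push_cast
    rfl
  -- Step 1: reindex
  have step1 : (∑ ν ∈ range (𝔮 ^ 2), f ν)
      = ∑ a ∈ range 𝔮, ∑ b ∈ range 𝔮, f (a + 𝔮 * b) := by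
    rw [← Finset.sum_product']
    apply Finset.sum_nbij' (i := fun ν => (ν % 𝔮, ν / 𝔮)) (j := fun x => x.1 + 𝔮 * x.2)
    · intro ν hν
      rw [Finset.mem_range, pow_two] at hν
      simp only [Finset.mem_product, Finset.mem_range]
      exact ⟨Nat.mod_lt _ (Nat.pos_of_ne_zero hq0), Nat.div_lt_of_lt_mul hν⟩
    · intro x hx
      simp only [Finset.mem_product, Finset.mem_range] at hx
      rw [Finset.mem_range, pow_two]
      calc x.1 + 𝔮 * x.2 < 𝔮 + 𝔮 * x.2 := by omega
        _ = 𝔮 * (x.2 + 1) := by ring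
        _ ≤ 𝔮 * 𝔮 := Nat.mul_le_mul_left _ hx.2
    · intro ν _
      exact (Nat.mod_add_div ν 𝔮)
    · intro x hx
      simp only [Finset.mem_product, Finset.mem_range] at hx
      have h1 : (x.1 + 𝔮 * x.2) % 𝔮 = x.1 := by
        rw [Nat.add_mul_mod_self_left, Nat.mod_eq_of_lt hx.1]
      have h2 : (x.1 + 𝔮 * x.2) / 𝔮 = x.2 := by
        rw [Nat.add_mul_div_left _ _ (Nat.pos_of_ne_zero hq0), Nat.div_eq_of_lt hx.1]
        omega
      simp [h1, h2]
    · intro ν _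
      congr 1
      exact (Nat.mod_add_div ν 𝔮).symm
  -- Step 2 : inner sums
  have hstep2 : ∀ a : ℕ, (∑ b ∈ range 𝔮, f (a + 𝔮 * b))
      = f a * (if ((𝔮 : ℤ) ∣ (j - 12 * p * (a : ℤ) ^ 2)) then (𝔮 : ℂ) else 0) := by
    intro a
    set c : ℤ := j - 12 * p * (a : ℤ) ^ 2 with hc
    set ω : ℂ := ζ ^ ((𝔮 : ℤ) * c) with hω
    have hterm : ∀ b : ℕ, f (a + 𝔮 * b) = f a * ω ^ b := by
      intro b
      have hE : j * ((a + 𝔮 * b : ℕ) : ℤ) - 4 * p * ((a + 𝔮 * b : ℕ) : ℤ) ^ 3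
          = (j * (a : ℤ) - 4 * p * (a : ℤ) ^ 3) + ((𝔮 : ℤ) * c) * (b : ℤ)
            + ((𝔮 : ℤ) ^ 2) * (-(12 * p * a * (b:ℤ) ^ 2) - 4 * p * 𝔮 * (b:ℤ) ^ 3) := by
        simp only [hc]; push_cast; ring
      simp only [hfdef]
      rw [hE, zpow_add₀ hζ0, zpow_add₀ hζ0, (hone _).2 (dvd_mul_right _ _), mul_one,
        zpow_mul, zpow_natCast]
    have hωq : ω ^ 𝔮 = 1 := by
      rw [hω, ← zpow_natCast, ← zpow_mul]
      exact (hone _).2 ⟨c, by ring⟩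
    have hω1 : ω = 1 ↔ (𝔮 : ℤ) ∣ c := by
      rw [hω, hone, sq,
        mul_dvd_mul_iff_left (show (𝔮 : ℤ) ≠ 0 by exact_mod_cast hq0)]
    calc (∑ b ∈ range 𝔮, f (a + 𝔮 * b)) = ∑ b ∈ range 𝔮, f a * ω ^ b :=
          Finset.sum_congr rfl fun b _ => hterm b
      _ = f a * ∑ b ∈ range 𝔮, ω ^ b := by rw [Finset.mul_sum]
      _ = f a * (if (𝔮 : ℤ) ∣ c then (𝔮 : ℂ) else 0) := by
          rw [geom_aux hωq, if_congr hω1 rfl rfl]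
  -- Step 3
  set T := (range 𝔮).filter (fun a : ℕ => (𝔮 : ℤ) ∣ (j - 12 * p * (a : ℤ) ^ 2)) with hT
  have step3 : (∑ ν ∈ range (𝔮 ^ 2), f ν) = (𝔮 : ℂ) * ∑ a ∈ T, f a := by
    rw [step1]
    rw [Finset.sum_congr rfl fun a _ => hstep2 a]
    rw [hT, Finset.sum_filter, Finset.mul_sum]
    refine Finset.sum_congr rfl fun a _ => ?_
    split_ifs with h
    · ring
    · ring
  rw [step3]
  have hqC : (𝔮 : ℂ) ≠ 0 := Nat.cast_ne_zero.mpr hq0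
  -- ZMod facts
  have hpz : (p : ZMod 𝔮) ≠ 0 := by
    rwa [Ne, ZMod.intCast_zmod_eq_zero_iff_dvd]
  have hnz : ∀ m : ℕ, 0 < m → m < 𝔮 → ((m : ℕ) : ZMod 𝔮) ≠ 0 := by
    intro m hm hmq h
    rw [ZMod.natCast_eq_zero_iff] at h
    exact absurd (Nat.le_of_dvd hm h) (by omega)
  have h2z : (2 : ZMod 𝔮) ≠ 0 := by exact_mod_cast hnz 2 (by norm_num) (by omega)
  have h3z : (3 : ZMod 𝔮) ≠ 0 := by exact_mod_cast hnz 3 (by norm_num) (by omega)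
  have h6z : (6 : ZMod 𝔮) ≠ 0 := by
    rw [show (6 : ZMod 𝔮) = 2 * 3 by norm_num]
    exact mul_ne_zero h2z h3z
  have h12z : (12 : ZMod 𝔮) ≠ 0 := by
    rw [show (12 : ZMod 𝔮) = 2 * 6 by norm_num]
    exact mul_ne_zero h2z h6z
  have h12pz : (12 : ZMod 𝔮) * (p : ZMod 𝔮) ≠ 0 := mul_ne_zero h12z hpz
  have hmem : ∀ a : ℕ, ((𝔮 : ℤ) ∣ (j - 12 * p * (a : ℤ) ^ 2))
      ↔ ((j : ZMod 𝔮) = 12 * (p : ZMod 𝔮) * ((a : ℕ) : ZMod 𝔮) ^ 2) := by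
    intro a
    rw [← ZMod.intCast_zmod_eq_zero_iff_dvd]
    push_cast
    rw [sub_eq_zero]
  by_cases hsq : legendreSym 𝔮 (3 * p * j) = -1
  · refine iff_of_true ?_ hsq
    have hTe : T = ∅ := by
      rw [hT, Finset.filter_eq_empty_iff]
      intro a _
      rw [hmem a]
      intro hcon
      apply (legendreSym.eq_neg_one_iff 𝔮).1 hsq
      refine ⟨6 * (p : ZMod 𝔮) * ((a : ℕ) : ZMod 𝔮), ?_⟩
      push_cast
      rw [hcon]
      ring
    rw [hTe]
    simp
  · refine iff_of_false ?_ hsq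
    refine mul_ne_zero hqC ?_
    by_cases hj0 : (j : ZMod 𝔮) = 0
    · -- T = {0}, sum = 1
      have hT0 : T = {0} := by
        ext a
        simp only [hT, Finset.mem_filter, Finset.mem_range, Finset.mem_singleton]
        rw [hmem a, hj0]
        constructor
        · rintro ⟨ha, heq⟩
          have h2 : ((a : ℕ) : ZMod 𝔮) ^ 2 = 0 := by
            rcases mul_eq_zero.1 heq.symm with h | h
            · exact absurd h h12pz
            · exact h
          have h3 : ((a : ℕ) : ZMod 𝔮) = 0 := by
            exact pow_eq_zero_iff (by norm_num) |>.1 h2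
          rw [ZMod.natCast_eq_zero_iff] at h3
          exact Nat.eq_zero_of_dvd_of_lt h3 ha
        · rintro rfl
          refine ⟨by omega, by push_cast; ring⟩
      rw [hT0, Finset.sum_singleton, hfdef]
      simp
    · -- legendre symbol is 1 : two solutions
      have h3pj : ((3 * p * j : ℤ) : ZMod 𝔮) ≠ 0 := by
        push_cast
        exact mul_ne_zero (mul_ne_zero h3z hpz) hj0
      have hsq' : IsSquare ((3 * p * j : ℤ) : ZMod 𝔮) := by
        by_contra hns
        exact hsq ((legendreSym.eq_neg_one_iff 𝔮).2 hns)
      obtain ⟨s, hs⟩ := hsq'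
      have hs0 : s ≠ 0 := by
        intro h
        rw [h, mul_zero] at hs
        exact h3pj hs
      have hu : (6 * (p : ZMod 𝔮)) ≠ 0 := mul_ne_zero h6z hpz
      set α : ZMod 𝔮 := s * (6 * (p : ZMod 𝔮))⁻¹ with hα
      have hαu : α * (6 * (p : ZMod 𝔮)) = s := by
        rw [hα, mul_assoc, inv_mul_cancel₀ hu, mul_one]
      have hα0 : α ≠ 0 := by
        intro h
        apply hs0
        rw [← hαu, h, zero_mul]
      have hjα : (j : ZMod 𝔮) = 12 * (p : ZMod 𝔮) * α ^ 2 := by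
        have hs' : (3 : ZMod 𝔮) * p * j = s * s := by
          push_cast at hs; linear_combination hs
        have h1 : (3 : ZMod 𝔮) * p * (j : ZMod 𝔮)
            = (3 : ZMod 𝔮) * p * (12 * (p : ZMod 𝔮) * α ^ 2) := by
          calc (3 : ZMod 𝔮) * p * (j : ZMod 𝔮) = s * s := hs'
            _ = (α * (6 * (p : ZMod 𝔮))) * (α * (6 * (p : ZMod 𝔮))) := by rw [hαu]
            _ = (3 : ZMod 𝔮) * p * (12 * (p : ZMod 𝔮) * α ^ 2) := by ring
        exact mul_left_cancel₀ (mul_ne_zero h3z hpz) h1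
      have hαα : α ≠ -α := by
        intro h
        have h2 : (2 : ZMod 𝔮) * α = 0 := by linear_combination h
        rcases mul_eq_zero.1 h2 with h' | h'
        · exact h2z h'
        · exact hα0 h'
      have hvne : α.val ≠ (-α).val := by
        intro h
        apply hαα
        have := congrArg (fun n : ℕ => ((n : ℕ) : ZMod 𝔮)) h
        simpa [ZMod.natCast_val, ZMod.cast_id] using this
      have hTpair : T = {α.val, (-α).val} := by
        ext a
        simp only [hT, Finset.mem_filter, Finset.mem_range, Finset.mem_insert,
          Finset.mem_singleton]
        rw [hmem a, hjα]
        constructor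
        · rintro ⟨ha, heq⟩
          have h2 : α ^ 2 = ((a : ℕ) : ZMod 𝔮) ^ 2 := mul_left_cancel₀ h12pz heq
          rcases sq_eq_sq_iff_eq_or_eq_neg.1 h2.symm with h | h
          · left; rw [← ZMod.val_cast_of_lt ha, h]
          · right
            rw [← ZMod.val_cast_of_lt ha, h]
        · rintro (rfl | rfl)
          · refine ⟨ZMod.val_lt α, ?_⟩
            rw [ZMod.natCast_rightInverse α]
          · refine ⟨ZMod.val_lt (-α), ?_⟩
            rw [ZMod.natCast_rightInverse (-α)]
            ring
      rw [hTpair, Finset.sum_pair hvne]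
      intro hzero
      set v₀ : ℕ := α.val
      set v₁ : ℕ := (-α).val
      set d : ℤ := (j * (v₀ : ℤ) - 4 * p * (v₀ : ℤ) ^ 3)
        - (j * (v₁ : ℤ) - 4 * p * (v₁ : ℤ) ^ 3) with hd
      have h1 : ζ ^ (j * (v₀ : ℤ) - 4 * p * (v₀ : ℤ) ^ 3)
          = - ζ ^ (j * (v₁ : ℤ) - 4 * p * (v₁ : ℤ) ^ 3) :=
        eq_neg_of_add_eq_zero_left hzero
      have hdm : ζ ^ d = -1 := by
        rw [hd, zpow_sub₀ hζ0, h1, neg_div, div_self (zpow_ne_zero _ hζ0)]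
      have hodd : Odd (𝔮 ^ 2) := (hq.odd_of_ne_two hq2).pow
      have hpow1 : (ζ ^ d) ^ (𝔮 ^ 2) = 1 := by
        rw [← zpow_natCast, ← zpow_mul]
        exact (hone _).2 ⟨d, by push_cast; ring⟩
      rw [hdm, Odd.neg_one_pow hodd] at hpow1
      norm_num at hpow1
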